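/- arXiv:2207.05328 — 2 statements merged into one kernel-verified Lean document; each statement's English description precedes it below -/
import Mathlib

section
/- Let F be a continuous cdf and X, Y independent random variables with 1 − F_X = (1 − F)^λ and 1 − F_Y = (1 − F)^μ, λ, μ > 0. Then P(Y > X) = λ/(λ+μ), and min(X,Y) is independent of the event {Y > X}. -/
/-!
If the cdf `F_X` of `X` is continuous, then `F_X(X)` is uniform on `[0, 1]`. With `S = 1 - F_X`
the hypotheses say `P(Y > s) = S(s)^q` for `q = μ/λ`, so by independence
`P(x < X < Y) = E[S(X)^q; X > x] = ∫_{F_X(x)}^1 (1 - u)^q du = S(x)^(q+1)/(q+1)`, and the case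
`x = -∞` gives `P(X < Y) = 1/(q+1) = λ/(λ+μ)`. Since also `P(min(X,Y) > x) = S(x) · S(x)^q`, the
two probabilities factor.
-/

open MeasureTheory ProbabilityTheory Filter Set

namespace ProbabilityTheory

variable {μ : Measure ℝ} [IsProbabilityMeasure μ]

lemma measure_Ioi_eq_ofReal_one_sub_cdf (x : ℝ) : μ (Ioi x) = ENNReal.ofReal (1 - cdf μ x) := by
  rw [← compl_Iic, prob_compl_eq_one_sub measurableSet_Iic, ← ofReal_cdf,
    ENNReal.ofReal_sub _ (cdf_nonneg μ x), ENNReal.ofReal_one]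

lemma measure_cdf_preimage_Iic (hcont : Continuous (cdf μ)) {t : ℝ} (ht0 : 0 ≤ t) (ht1 : t < 1) :
    μ (cdf μ ⁻¹' Iic t) = ENNReal.ofReal t := by
  apply le_antisymm
  · rcases (cdf μ ⁻¹' Iic t).eq_empty_or_nonempty with hA | hA
    · simp [hA]
    obtain ⟨M, hM⟩ := eventually_atTop.mp ((tendsto_cdf_atTop μ).eventually (lt_mem_nhds ht1))
    have hbdd : BddAbove (cdf μ ⁻¹' Iic t) :=
      ⟨M, fun s hs => le_of_not_gt fun hMs => (hM s hMs.le).not_ge hs⟩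
    have hc : sSup (cdf μ ⁻¹' Iic t) ∈ cdf μ ⁻¹' Iic t :=
      (isClosed_Iic.preimage hcont).csSup_mem hA hbdd
    calc μ (cdf μ ⁻¹' Iic t) ≤ μ (Iic (sSup (cdf μ ⁻¹' Iic t))) :=
          measure_mono fun s hs => le_csSup hbdd hs
      _ ≤ ENNReal.ofReal t := by rw [← ofReal_cdf]; exact ENNReal.ofReal_le_ofReal hc
  · rcases ht0.eq_or_lt with rfl | ht0
    · simp
    obtain ⟨s, rfl⟩ : t ∈ range (cdf μ) := mem_range_of_exists_le_of_exists_ge hcont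
      (((tendsto_cdf_atBot μ).eventually (gt_mem_nhds ht0)).exists.imp fun _ => le_of_lt)
      (((tendsto_cdf_atTop μ).eventually (lt_mem_nhds ht1)).exists.imp fun _ => le_of_lt)
    rw [ofReal_cdf]
    exact measure_mono fun r hr => monotone_cdf μ hr

theorem map_cdf_eq_volume_restrict (hcont : Continuous (cdf μ)) :
    μ.map (cdf μ) = volume.restrict (Icc 0 1) := by
  refine Measure.ext_of_Iic _ _ fun t => ?_
  rw [Measure.map_apply hcont.measurable measurableSet_Iic,
    Measure.restrict_apply measurableSet_Iic]
  rcases lt_or_ge t 0 with ht0 | ht0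
  · have h1 : cdf μ ⁻¹' Iic t = ∅ :=
      eq_empty_of_forall_notMem fun s hs => (ht0.trans_le (cdf_nonneg μ s)).not_ge hs
    have h2 : Iic t ∩ Icc 0 1 = ∅ :=
      eq_empty_of_forall_notMem fun u hu => (ht0.trans_le hu.2.1).not_ge hu.1
    rw [h1, h2, measure_empty, measure_empty]
  rcases lt_or_ge t 1 with ht1 | ht1
  · have h : Iic t ∩ Icc 0 1 = Icc 0 t := by ext u; grind
    rw [measure_cdf_preimage_Iic hcont ht0 ht1, h, Real.volume_Icc, sub_zero]
  · have h1 : cdf μ ⁻¹' Iic t = univ :=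
      eq_univ_of_forall fun s => (cdf_le_one μ s).trans ht1
    rw [h1, measure_univ, inter_eq_right.mpr fun u hu => hu.2.trans ht1, Real.volume_Icc]
    simp

theorem setLIntegral_Ioi_comp_cdf (hcont : Continuous (cdf μ)) {g : ℝ → ENNReal}
    (hg : Measurable g) (x : ℝ) :
    ∫⁻ s in Ioi x, g (cdf μ s) ∂μ = ∫⁻ u in Ioc (cdf μ x) 1, g u := by
  have hsub : cdf μ ⁻¹' Ioi (cdf μ x) ⊆ Ioi x := fun s hs => (monotone_cdf μ).reflect_lt hs
  have hIoc : Ioi (cdf μ x) ∩ Icc 0 1 = Ioc (cdf μ x) 1 := by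
    have := cdf_nonneg μ x
    ext u; grind
  have hmeas : μ (cdf μ ⁻¹' Ioi (cdf μ x)) = μ (Ioi x) := by
    rw [← Measure.map_apply hcont.measurable measurableSet_Ioi, map_cdf_eq_volume_restrict hcont,
      Measure.restrict_apply measurableSet_Ioi, hIoc, Real.volume_Ioc,
      measure_Ioi_eq_ofReal_one_sub_cdf]
  have hae : cdf μ ⁻¹' Ioi (cdf μ x) =ᵐ[μ] Ioi x :=
    ae_eq_of_subset_of_measure_ge hsub hmeas.ge
      (hcont.measurable measurableSet_Ioi).nullMeasurableSet (measure_ne_top μ _)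
  rw [← setLIntegral_congr hae, ← setLIntegral_map measurableSet_Ioi hg hcont.measurable,
    map_cdf_eq_volume_restrict hcont, Measure.restrict_restrict measurableSet_Ioi, hIoc]

theorem lintegral_comp_cdf (hcont : Continuous (cdf μ)) {g : ℝ → ENNReal} (hg : Measurable g) :
    ∫⁻ s, g (cdf μ s) ∂μ = ∫⁻ u in Icc 0 1, g u := by
  rw [← lintegral_map hg hcont.measurable, map_cdf_eq_volume_restrict hcont]

end ProbabilityTheory

lemma lintegral_Ioc_one_sub_rpow {c p : ℝ} (hc : c ≤ 1) (hp : -1 < p) :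
    ∫⁻ u in Ioc c 1, ENNReal.ofReal ((1 - u) ^ p)
      = ENNReal.ofReal ((1 - c) ^ (p + 1) / (p + 1)) := by
  have hint : IntegrableOn (fun u : ℝ => (1 - u) ^ p) (Ioc c 1) := by
    have := (intervalIntegral.intervalIntegrable_rpow' hp (a := 1 - c) (b := 0)).comp_sub_left 1
    rw [sub_sub_cancel, sub_zero] at this
    exact (intervalIntegrable_iff_integrableOn_Ioc_of_le hc).mp this
  have hnonneg : 0 ≤ᵐ[volume.restrict (Ioc c 1)] fun u : ℝ => (1 - u) ^ p :=
    ae_restrict_of_forall_mem measurableSet_Ioc fun u hu => Real.rpow_nonneg (sub_nonneg.2 hu.2) p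
  rw [← ofReal_integral_eq_lintegral_ofReal hint hnonneg, ← intervalIntegral.integral_of_le hc,
    intervalIntegral.integral_comp_sub_left (fun u => u ^ p), sub_self, integral_rpow (Or.inl hp),
    Real.zero_rpow (by linarith), sub_zero]

section

variable {Ω : Type*} [MeasurableSpace Ω] {P : Measure Ω} {X Y : Ω → ℝ}

lemma cdf_map_apply [IsProbabilityMeasure P] (hX : Measurable X) (x : ℝ) :
    cdf (P.map X) x = (P {ω | X ω ≤ x}).toReal := by
  have := Measure.isProbabilityMeasure_map (μ := P) hX.aemeasurable
  rw [cdf_eq_real, map_measureReal_apply hX measurableSet_Iic]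
  rfl

lemma measure_mem_and_lt_of_indepFun [IsFiniteMeasure P] (hX : Measurable X) (hY : Measurable Y)
    (hind : IndepFun X Y P) {A : Set ℝ} (hA : MeasurableSet A) :
    P {ω | X ω ∈ A ∧ X ω < Y ω} = ∫⁻ s in A, P.map Y (Ioi s) ∂(P.map X) := by
  have hS : MeasurableSet {p : ℝ × ℝ | p.1 ∈ A ∧ p.1 < p.2} :=
    (measurable_fst hA).inter (measurableSet_lt measurable_fst measurable_snd)
  rw [← lintegral_indicator hA]
  change P ((fun ω => (X ω, Y ω)) ⁻¹' {p : ℝ × ℝ | p.1 ∈ A ∧ p.1 < p.2}) = _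
  rw [← Measure.map_apply (hX.prodMk hY) hS,
    (indepFun_iff_map_prod_eq_prod_map_map hX.aemeasurable hY.aemeasurable).mp hind,
    Measure.prod_apply hS]
  refine lintegral_congr fun s => ?_
  by_cases hs : s ∈ A
  · simp [hs, Ioi]
  · simp [hs]

lemma measure_lt_min_of_indepFun (hX : Measurable X) (hY : Measurable Y)
    (hind : IndepFun X Y P) (x : ℝ) :
    P {ω | x < min (X ω) (Y ω)} = P.map X (Ioi x) * P.map Y (Ioi x) := by
  rw [Measure.map_apply hX measurableSet_Ioi, Measure.map_apply hY measurableSet_Ioi,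
    ← hind.measure_inter_preimage_eq_mul _ _ measurableSet_Ioi measurableSet_Ioi]
  congr 1
  ext ω
  simp

theorem measure_lt_eq_and_min_indep_of_survival_eq_rpow [IsProbabilityMeasure P]
    (hX : Measurable X) (hY : Measurable Y) (hind : IndepFun X Y P)
    (hcont : Continuous (cdf (P.map X))) {q : ℝ} (hq : -1 < q)
    (hYsurv : ∀ s, P.map Y (Ioi s) = ENNReal.ofReal ((1 - cdf (P.map X) s) ^ q)) :
    P {ω | X ω < Y ω} = ENNReal.ofReal (1 / (q + 1)) ∧
    ∀ x, P ({ω | x < min (X ω) (Y ω)} ∩ {ω | X ω < Y ω})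
      = P {ω | x < min (X ω) (Y ω)} * P {ω | X ω < Y ω} := by
  have := Measure.isProbabilityMeasure_map (μ := P) hX.aemeasurable
  set F := cdf (P.map X)
  have hg : Measurable fun u : ℝ => ENNReal.ofReal ((1 - u) ^ q) := by fun_prop
  have hlt : P {ω | X ω < Y ω} = ENNReal.ofReal (1 / (q + 1)) :=
    calc P {ω | X ω < Y ω} = P {ω | X ω ∈ univ ∧ X ω < Y ω} := by simp
      _ = ∫⁻ s, ENNReal.ofReal ((1 - F s) ^ q) ∂(P.map X) := by
        rw [measure_mem_and_lt_of_indepFun hX hY hind MeasurableSet.univ, Measure.restrict_univ]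
        simp only [hYsurv, F]
      _ = ∫⁻ u in Ioc 0 1, ENNReal.ofReal ((1 - u) ^ q) := by
        rw [lintegral_comp_cdf hcont hg, setLIntegral_congr Ioc_ae_eq_Icc]
      _ = ENNReal.ofReal (1 / (q + 1)) := by
        rw [lintegral_Ioc_one_sub_rpow zero_le_one hq, sub_zero, Real.one_rpow]
  refine ⟨hlt, fun x => ?_⟩
  have h1F : 0 ≤ 1 - F x := sub_nonneg.2 (cdf_le_one _ x)
  have hmin : P {ω | x < min (X ω) (Y ω)} = ENNReal.ofReal ((1 - F x) ^ (q + 1)) := by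
    rw [measure_lt_min_of_indepFun hX hY hind, measure_Ioi_eq_ofReal_one_sub_cdf, hYsurv,
      ← ENNReal.ofReal_mul h1F, Real.rpow_add_one' h1F (by linarith), mul_comm]
  calc P ({ω | x < min (X ω) (Y ω)} ∩ {ω | X ω < Y ω}) = P {ω | X ω ∈ Ioi x ∧ X ω < Y ω} := by
        congr 1; ext ω; grind
    _ = ∫⁻ s in Ioi x, ENNReal.ofReal ((1 - F s) ^ q) ∂(P.map X) := by
        rw [measure_mem_and_lt_of_indepFun hX hY hind measurableSet_Ioi]
        simp only [hYsurv, F]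
    _ = ENNReal.ofReal ((1 - F x) ^ (q + 1) / (q + 1)) := by
        rw [setLIntegral_Ioi_comp_cdf hcont hg, lintegral_Ioc_one_sub_rpow (cdf_le_one _ x) hq]
    _ = P {ω | x < min (X ω) (Y ω)} * P {ω | X ω < Y ω} := by
        rw [hmin, hlt, ← ENNReal.ofReal_mul (Real.rpow_nonneg h1F _), mul_one_div]

end

theorem stmt8_general {Ω : Type*} [MeasurableSpace Ω] (P : Measure Ω) [IsProbabilityMeasure P]
    (X Y : Ω → ℝ) (hX : Measurable X) (hY : Measurable Y)
    (hind : IndepFun X Y P)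
    (F : ℝ → ℝ) (hFcont : Continuous F) (hFmono : Monotone F)
    (hF1 : Tendsto F atTop (nhds 1))
    (lam mu : ℝ) (hlam : 0 < lam) (hmu : 0 < mu)
    (hFX : ∀ x : ℝ, 1 - (P {ω | X ω ≤ x}).toReal = (1 - F x) ^ lam)
    (hFY : ∀ x : ℝ, 1 - (P {ω | Y ω ≤ x}).toReal = (1 - F x) ^ mu) :
    (P {ω | X ω < Y ω}).toReal = lam / (lam + mu)
    ∧ ∀ x : ℝ, (P ({ω | x < min (X ω) (Y ω)} ∩ {ω | X ω < Y ω})).toReal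
        = (P {ω | x < min (X ω) (Y ω)}).toReal * (P {ω | X ω < Y ω}).toReal := by
  have := Measure.isProbabilityMeasure_map (μ := P) hY.aemeasurable
  have hG : ∀ x, 0 ≤ 1 - F x := fun x => sub_nonneg.2 (hFmono.ge_of_tendsto hF1 x)
  have hcdfX : ∀ x, 1 - cdf (P.map X) x = (1 - F x) ^ lam := fun x => by
    rw [cdf_map_apply hX, hFX]
  have hcont : Continuous (cdf (P.map X)) := by
    have : ⇑(cdf (P.map X)) = fun x => 1 - (1 - F x) ^ lam :=
      funext fun x => by linarith [hcdfX x]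
    rw [this]
    exact continuous_const.sub ((continuous_const.sub hFcont).rpow_const fun _ => Or.inr hlam.le)
  have hYsurv : ∀ s, P.map Y (Ioi s) = ENNReal.ofReal ((1 - cdf (P.map X) s) ^ (mu / lam)) :=
    fun s => by
      rw [measure_Ioi_eq_ofReal_one_sub_cdf, cdf_map_apply hY, hFY, hcdfX, ← Real.rpow_mul (hG s),
        mul_div_cancel₀ _ hlam.ne']
  obtain ⟨hlt, hindep⟩ := measure_lt_eq_and_min_indep_of_survival_eq_rpow hX hY hind hcont
    (by linarith [div_pos hmu hlam]) hYsurv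
  have hq : 1 / (mu / lam + 1) = lam / (lam + mu) := by field_simp; ring
  refine ⟨?_, fun x => ?_⟩
  · rw [hlt, ENNReal.toReal_ofReal (by positivity), hq]
  · rw [hindep x, ENNReal.toReal_mul]

/-- If 1 − F_X = (1 − F)^λ and 1 − F_Y = (1 − F)^μ for a continuous cdf F, then
P(Y > X) = λ/(λ+μ) and min(X,Y) is independent of {Y > X}. -/
theorem stmt8 {Ω : Type*} [MeasurableSpace Ω] (P : Measure Ω) [IsProbabilityMeasure P]
    (X Y : Ω → ℝ) (hX : Measurable X) (hY : Measurable Y)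
    (hind : IndepFun X Y P)
    (F : ℝ → ℝ) (hFcont : Continuous F) (hFmono : Monotone F)
    (hF0 : Tendsto F atBot (nhds 0)) (hF1 : Tendsto F atTop (nhds 1))
    (lam mu : ℝ) (hlam : 0 < lam) (hmu : 0 < mu)
    (hFX : ∀ x : ℝ, 1 - (P {ω | X ω ≤ x}).toReal = (1 - F x) ^ lam)
    (hFY : ∀ x : ℝ, 1 - (P {ω | Y ω ≤ x}).toReal = (1 - F x) ^ mu) :
    (P {ω | X ω < Y ω}).toReal = lam / (lam + mu)
    ∧ ∀ x : ℝ, (P ({ω | x < min (X ω) (Y ω)} ∩ {ω | X ω < Y ω})).toReal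
        = (P {ω | x < min (X ω) (Y ω)}).toReal * (P {ω | X ω < Y ω}).toReal :=
  stmt8_general P X Y hX hY hind F hFcont hFmono hF1 lam mu hlam hmu hFX hFY
end

section
/- Let X, Y be independent real-valued random variables where F_X is continuous, F_Y is arbitrary, and P(Y > X) ∈ (0,1). Then min(X,Y) is independent of {Y > X} if and only if 1 − F_Y(x) = (1 − F_X(x))^c for some c > 0 and all real x. -/
/-!
Write `S = 1 - F_X`, `T = 1 - F_Y` and `ν` for the law of `X`. By independence
`P(min(X,Y) > x, X < Y) = Φ x := ∫_{(x,∞)} T dν` and `P(min(X,Y) > x) = S x * T x`.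
As `T` is antitone, `Φ x - Φ y` lies between `T y * (S x - S y)` and `T x * (S x - S y)` for
`x ≤ y`. Hence `ψ u := Φ x` for `S x = u` (every `u ∈ (0,1)` occurs, `S` being continuous) has
derivative `T x`. If `Φ = p * S * T` with `p = P(X < Y)`, this is the ODE `ψ' = ψ / (p * u)`,
so `ψ = p * u ^ (1/p)` and `T = S ^ (1/p - 1)`. Conversely, if `T = S ^ c`, then `ψ' = u ^ c` and
`ψ(0+) = 0` give `Φ = S ^ (c+1) / (c+1)`, and `p = ψ(1-) = 1 / (c+1)`.
-/

open MeasureTheory ProbabilityTheory Set Filter Topology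

theorem hasDerivAt_of_forall_sub_mem_Icc {f g : ℝ → ℝ} {s : Set ℝ} {x : ℝ} (hs : s ∈ 𝓝 x)
    (hg : ContinuousAt g x)
    (h : ∀ a ∈ s, ∀ b ∈ s, a < b → f b - f a ∈ Icc (g a * (b - a)) (g b * (b - a))) :
    HasDerivAt f (g x) x := by
  have hslope : ∀ y ∈ s, y ≠ x → slope f x y ∈ Icc (min (g x) (g y)) (max (g x) (g y)) := by
    intro y hy hyx
    rw [slope_def_field]
    rcases hyx.lt_or_gt with hlt | hlt
    · obtain ⟨h₁, h₂⟩ := h y hy x (mem_of_mem_nhds hs) hlt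
      have hxy : 0 < x - y := sub_pos.2 hlt
      rw [← neg_div_neg_eq, neg_sub, neg_sub]
      exact ⟨(min_le_right _ _).trans ((le_div_iff₀ hxy).2 h₁),
        ((div_le_iff₀ hxy).2 h₂).trans (le_max_left _ _)⟩
    · obtain ⟨h₁, h₂⟩ := h x (mem_of_mem_nhds hs) y hy hlt
      have hxy : 0 < y - x := sub_pos.2 hlt
      exact ⟨(min_le_left _ _).trans ((le_div_iff₀ hxy).2 h₁),
        ((div_le_iff₀ hxy).2 h₂).trans (le_max_right _ _)⟩
  have hg' : Tendsto g (𝓝[≠] x) (𝓝 (g x)) := hg.tendsto.mono_left nhdsWithin_le_nhds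
  rw [hasDerivAt_iff_tendsto_slope]
  refine tendsto_of_tendsto_of_tendsto_of_le_of_le'
    (by simpa using (tendsto_const_nhds (x := g x)).min hg')
    (by simpa using (tendsto_const_nhds (x := g x)).max hg') ?_ ?_ <;>
  filter_upwards [nhdsWithin_le_nhds hs, self_mem_nhdsWithin] with y hy hyx
  exacts [(hslope y hy hyx).1, (hslope y hy hyx).2]

theorem eq_of_hasDerivAt_zero_of_tendsto {f : ℝ → ℝ} {s : Set ℝ} {l : Filter ℝ} [l.NeBot]
    {L : ℝ} (hs : IsOpen s) (hs' : IsPreconnected s) (hsl : s ∈ l)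
    (hf : ∀ x ∈ s, HasDerivAt f 0 x) (hL : Tendsto f l (𝓝 L)) : ∀ x ∈ s, f x = L := by
  obtain ⟨k, hk⟩ := hs.exists_is_const_of_deriv_eq_zero hs'
    (fun x hx => (hf x hx).differentiableAt.differentiableWithinAt) (fun x hx => (hf x hx).deriv)
  have hk' : Tendsto f l (𝓝 k) :=
    tendsto_const_nhds.congr' (eventually_of_mem hsl fun x hx => (hk x hx).symm)
  intro x hx
  rw [hk x hx, tendsto_nhds_unique hk' hL]

theorem eq_rpow_of_forall_sub_mem_Icc {p : ℝ} (hp : 0 < p) {g : ℝ → ℝ}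
    (hg : ∀ u ∈ Ioo 0 1, g u ∈ Icc 0 1)
    (h : ∀ v ∈ Ioo 0 1, ∀ u ∈ Ioo 0 1, v < u →
      u * g u * p - v * g v * p ∈ Icc (g v * (u - v)) (g u * (u - v)))
    (hlim : Tendsto (fun u => u * g u * p) (𝓝[<] 1) (𝓝 p)) :
    ∀ u ∈ Ioo 0 1, g u = u ^ (p⁻¹ - 1) := by
  set ψ := fun u => u * g u * p
  have hψ : ContinuousOn ψ (Ioo 0 1) := by
    refine (LipschitzOnWith.of_le_add fun a ha b hb => ?_).continuousOn
    rcases lt_or_ge b a with hba | hab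
    · have := (h b hb a ha hba).2
      have := mul_le_of_le_one_left (sub_pos.2 hba).le (hg a ha).2
      rw [Real.dist_eq, abs_of_pos (sub_pos.2 hba)]
      linarith
    · rcases hab.eq_or_lt with rfl | hab
      · simp
      have := (h a ha b hb hab).1
      have := mul_nonneg (hg a ha).1 (sub_pos.2 hab).le
      linarith [dist_nonneg (x := a) (y := b)]
  have hg_cont : ∀ u ∈ Ioo 0 1, ContinuousAt g u := by
    intro u hu
    refine ((hψ.continuousAt (isOpen_Ioo.mem_nhds hu)).div
      (continuousAt_id.mul continuousAt_const) (mul_pos hu.1 hp).ne').congr ?_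
    filter_upwards [isOpen_Ioo.mem_nhds hu] with v hv
    simp only [Pi.div_apply, Pi.mul_apply, id, ψ]
    field_simp [hv.1.ne']
  have hφ : ∀ u ∈ Ioo 0 1, HasDerivAt (fun v => ψ v * v ^ (-p⁻¹)) 0 u := by
    intro u hu
    refine ((hasDerivAt_of_forall_sub_mem_Icc (isOpen_Ioo.mem_nhds hu) (hg_cont u hu) h).mul
      (Real.hasDerivAt_rpow_const (p := -p⁻¹) (Or.inl hu.1.ne'))).congr_deriv ?_
    rw [Real.rpow_sub_one hu.1.ne']
    field_simp [hu.1.ne']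
    ring
  have hφ_lim : Tendsto (fun v => ψ v * v ^ (-p⁻¹)) (𝓝[<] 1) (𝓝 p) := by
    simpa using hlim.mul ((Real.continuousAt_rpow_const 1 (-p⁻¹)
      (Or.inl one_ne_zero)).tendsto.mono_left nhdsWithin_le_nhds)
  intro u hu
  have hφu := eq_of_hasDerivAt_zero_of_tendsto isOpen_Ioo isPreconnected_Ioo
    (Ioo_mem_nhdsLT zero_lt_one) hφ hφ_lim u hu
  simp only [ψ, Real.rpow_neg hu.1.le] at hφu
  field_simp at hφu
  rw [one_div, div_eq_one_iff_eq (Real.rpow_pos_of_pos hu.1 _).ne'] at hφu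
  rw [Real.rpow_sub_one hu.1.ne', eq_div_iff hu.1.ne']
  linarith

theorem eq_rpow_div_of_forall_sub_mem_Icc {c : ℝ} (hc : 0 < c) {ψ : ℝ → ℝ}
    (h : ∀ v ∈ Ioo 0 1, ∀ u ∈ Ioo 0 1, v < u →
      ψ u - ψ v ∈ Icc (v ^ c * (u - v)) (u ^ c * (u - v)))
    (h0 : Tendsto ψ (𝓝[>] 0) (𝓝 0)) : ∀ u ∈ Ioo 0 1, ψ u = u ^ (c + 1) / (c + 1) := by
  have hD : ∀ u ∈ Ioo 0 1, HasDerivAt (fun v => ψ v - v ^ (c + 1) / (c + 1)) 0 u := by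
    intro u hu
    refine ((hasDerivAt_of_forall_sub_mem_Icc (isOpen_Ioo.mem_nhds hu)
      (Real.continuousAt_rpow_const _ _ (Or.inl hu.1.ne')) h).sub
      ((Real.hasDerivAt_rpow_const (p := c + 1) (Or.inl hu.1.ne')).div_const _)).congr_deriv ?_
    field_simp
    ring_nf
  have hD_lim : Tendsto (fun v => ψ v - v ^ (c + 1) / (c + 1)) (𝓝[>] 0) (𝓝 0) := by
    have := ((Real.continuousAt_rpow_const 0 (c + 1) (Or.inr (by positivity))).tendsto.div_const
      (c + 1)).mono_left (nhdsWithin_le_nhds (s := Ioi 0))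
    simpa [Real.zero_rpow (by positivity : c + 1 ≠ 0)] using h0.sub this
  intro u hu
  linarith [eq_of_hasDerivAt_zero_of_tendsto isOpen_Ioo isPreconnected_Ioo
    (Ioo_mem_nhdsGT zero_lt_one) hD hD_lim u hu]

theorem Antitone.setIntegral_Ioc_mem_Icc {ν : Measure ℝ} [IsFiniteMeasure ν] {f : ℝ → ℝ}
    (hf : Antitone f) (x y : ℝ) :
    ∫ a in Ioc x y, f a ∂ν ∈ Icc (f y * ν.real (Ioc x y)) (f x * ν.real (Ioc x y)) := by
  have hint : IntegrableOn f (Ioc x y) ν :=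
    ((hf.antitoneOn _).integrableOn_isCompact isCompact_Icc).mono_set Ioc_subset_Icc_self
  constructor
  · calc f y * ν.real (Ioc x y) = ∫ _ in Ioc x y, f y ∂ν := by simp [mul_comm]
      _ ≤ _ := setIntegral_mono_on (integrableOn_const (by simp)) hint measurableSet_Ioc
          fun a ha => hf ha.2
  · calc ∫ a in Ioc x y, f a ∂ν ≤ ∫ _ in Ioc x y, f x ∂ν :=
          setIntegral_mono_on hint (integrableOn_const (by simp)) measurableSet_Ioc
            fun a ha => hf ha.1.le
      _ = f x * ν.real (Ioc x y) := by simp [mul_comm]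

theorem Antitone.integrable_of_mem_Icc {ν : Measure ℝ} [IsFiniteMeasure ν] {f : ℝ → ℝ}
    (hf : Antitone f) (hf01 : ∀ x, f x ∈ Icc 0 1) : Integrable f ν :=
  .of_bound hf.measurable.aestronglyMeasurable 1 (.of_forall fun x => by
    rw [Real.norm_of_nonneg (hf01 x).1]; exact (hf01 x).2)

theorem setIntegral_mem_Icc_measureReal {α : Type*} [MeasurableSpace α] {ν : Measure α}
    [IsFiniteMeasure ν] {f : α → ℝ} (hf01 : ∀ a, f a ∈ Icc 0 1) {s : Set α}
    (hs : MeasurableSet s) : ∫ a in s, f a ∂ν ∈ Icc 0 (ν.real s) := by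
  refine ⟨setIntegral_nonneg hs fun a _ => (hf01 a).1, ?_⟩
  have := norm_setIntegral_le_of_norm_le_const (measure_lt_top ν s) (C := 1) (f := f)
    fun a _ => by rw [Real.norm_of_nonneg (hf01 a).1]; exact (hf01 a).2
  rw [one_mul] at this
  exact (le_abs_self _).trans this

section Cdf

variable {ν : Measure ℝ}

theorem antitone_one_sub_cdf : Antitone fun a => 1 - cdf ν a :=
  fun _ _ hab => sub_le_sub_left (monotone_cdf ν hab) 1

theorem one_sub_cdf_mem_Icc (a : ℝ) : 1 - cdf ν a ∈ Icc 0 1 :=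
  ⟨sub_nonneg.2 (cdf_le_one ν a), sub_le_self 1 (cdf_nonneg ν a)⟩

theorem antitone_one_sub_cdf_rpow {c : ℝ} (hc : 0 < c) : Antitone fun a => (1 - cdf ν a) ^ c :=
  fun _ _ hab => Real.rpow_le_rpow (one_sub_cdf_mem_Icc _).1 (antitone_one_sub_cdf hab) hc.le

theorem one_sub_cdf_rpow_mem_Icc {c : ℝ} (hc : 0 < c) (a : ℝ) : (1 - cdf ν a) ^ c ∈ Icc 0 1 :=
  ⟨Real.rpow_nonneg (one_sub_cdf_mem_Icc a).1 c,
    Real.rpow_le_one (one_sub_cdf_mem_Icc a).1 (one_sub_cdf_mem_Icc a).2 hc.le⟩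

theorem exists_one_sub_cdf_eq (hcont : Continuous (cdf ν)) :
    ∃ τ : ℝ → ℝ, ∀ u ∈ Ioo 0 1, 1 - cdf ν (τ u) = u := by
  have : ∀ u, ∃ x, u ∈ Ioo (0 : ℝ) 1 → 1 - cdf ν x = u := by
    intro u
    by_cases hu : u ∈ Ioo (0 : ℝ) 1
    · obtain ⟨a, ha⟩ := ((tendsto_cdf_atBot ν).eventually_lt_const (sub_pos.2 hu.2)).exists
      obtain ⟨b, hb⟩ := ((tendsto_cdf_atTop ν).eventually_const_lt (sub_lt_self 1 hu.1)).exists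
      obtain ⟨x, hx⟩ := intermediate_value_univ a b hcont ⟨ha.le, hb.le⟩
      exact ⟨x, fun _ => by rw [hx]; ring⟩
    · exact ⟨0, fun h => absurd h hu⟩
  choose τ hτ using this
  exact ⟨τ, hτ⟩

theorem le_zero_of_cdf_eq_one {f : ℝ → ℝ} (hcont : Continuous (cdf ν)) (hf : Antitone f)
    {c : ℝ} (hc : 0 < c) (hmid : ∀ y, 1 - cdf ν y ∈ Ioo 0 1 → f y = (1 - cdf ν y) ^ c)
    {x : ℝ} (hx : cdf ν x = 1) : f x ≤ 0 := by
  obtain ⟨τ, hτ⟩ := exists_one_sub_cdf_eq hcont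
  have hlim : Tendsto (fun u : ℝ => u ^ c) (𝓝[>] 0) (𝓝 0) := by
    simpa [Real.zero_rpow hc.ne'] using
      (Real.continuousAt_rpow_const 0 c (Or.inr hc.le)).tendsto.mono_left nhdsWithin_le_nhds
  refine ge_of_tendsto hlim ?_
  filter_upwards [Ioo_mem_nhdsGT zero_lt_one] with u hu
  have hτx : τ u ≤ x := by
    by_contra! h
    linarith [monotone_cdf ν h.le, hτ u hu, hu.1]
  calc f x ≤ f (τ u) := hf hτx
    _ = u ^ c := by rw [hmid _ (by rwa [hτ u hu]), hτ u hu]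

end Cdf

section OneSubCdf

variable {ν : Measure ℝ} [IsProbabilityMeasure ν] {f : ℝ → ℝ}

theorem measureReal_Ioc_eq_cdf_sub {x y : ℝ} (hxy : x ≤ y) :
    ν.real (Ioc x y) = cdf ν y - cdf ν x := by
  rw [measureReal_def, ← measure_cdf ν, StieltjesFunction.measure_Ioc, measure_cdf,
    ENNReal.toReal_ofReal (sub_nonneg.2 (monotone_cdf ν hxy))]

theorem measureReal_Ioi_eq_one_sub_cdf (x : ℝ) : ν.real (Ioi x) = 1 - cdf ν x := by
  rw [← compl_Iic, measureReal_compl measurableSet_Iic, probReal_univ, cdf_eq_real]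

theorem setIntegral_Ioi_sub_mem_Icc (hf : Antitone f) (hf01 : ∀ x, f x ∈ Icc 0 1) {x y : ℝ}
    (hxy : x ≤ y) : ∫ a in Ioi x, f a ∂ν - ∫ a in Ioi y, f a ∂ν ∈
      Icc (f y * (cdf ν y - cdf ν x)) (f x * (cdf ν y - cdf ν x)) := by
  have hint : Integrable f ν := hf.integrable_of_mem_Icc hf01
  rw [← Ioc_union_Ioi_eq_Ioi hxy, setIntegral_union (Ioc_disjoint_Ioi le_rfl) measurableSet_Ioi
    hint.integrableOn hint.integrableOn, add_sub_cancel_right, ← measureReal_Ioc_eq_cdf_sub hxy]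
  exact hf.setIntegral_Ioc_mem_Icc x y

theorem setIntegral_Ioi_eq_of_cdf_eq (hf : Antitone f) (hf01 : ∀ x, f x ∈ Icc 0 1) {x y : ℝ}
    (hxy : cdf ν x = cdf ν y) : ∫ a in Ioi x, f a ∂ν = ∫ a in Ioi y, f a ∂ν := by
  wlog h : x ≤ y generalizing x y
  · exact (this hxy.symm (le_of_not_ge h)).symm
  have := setIntegral_Ioi_sub_mem_Icc (ν := ν) hf hf01 h
  rwa [hxy, sub_self, mul_zero, mul_zero, Icc_self, mem_singleton_iff, sub_eq_zero] at this

theorem setIntegral_Ioi_mem_Icc (hf01 : ∀ x, f x ∈ Icc 0 1) (x : ℝ) :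
    ∫ a in Ioi x, f a ∂ν ∈ Icc 0 (1 - cdf ν x) := by
  simpa only [measureReal_Ioi_eq_one_sub_cdf] using
    setIntegral_mem_Icc_measureReal (ν := ν) hf01 (measurableSet_Ioi (a := x))

theorem integral_sub_setIntegral_Ioi_mem_Icc (hf : Antitone f) (hf01 : ∀ x, f x ∈ Icc 0 1)
    (x : ℝ) : ∫ a, f a ∂ν - ∫ a in Ioi x, f a ∂ν ∈ Icc 0 (cdf ν x) := by
  rw [← integral_add_compl measurableSet_Ioi (hf.integrable_of_mem_Icc hf01), compl_Ioi,
    add_sub_cancel_left, cdf_eq_real]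
  exact setIntegral_mem_Icc_measureReal hf01 measurableSet_Iic

variable {τ : ℝ → ℝ}

theorem setIntegral_Ioi_section_sub_mem_Icc (hf : Antitone f) (hf01 : ∀ x, f x ∈ Icc 0 1)
    (hτ : ∀ u ∈ Ioo 0 1, 1 - cdf ν (τ u) = u) {u v : ℝ} (hv : v ∈ Ioo 0 1) (hu : u ∈ Ioo 0 1)
    (hvu : v < u) : ∫ a in Ioi (τ u), f a ∂ν - ∫ a in Ioi (τ v), f a ∂ν ∈
      Icc (f (τ v) * (u - v)) (f (τ u) * (u - v)) := by
  have hτuv : τ u ≤ τ v := by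
    by_contra! h
    linarith [monotone_cdf ν h.le, hτ u hu, hτ v hv]
  have hcdf : cdf ν (τ v) - cdf ν (τ u) = u - v := by linarith [hτ u hu, hτ v hv]
  simpa only [hcdf] using setIntegral_Ioi_sub_mem_Icc (ν := ν) hf hf01 hτuv

theorem tendsto_setIntegral_Ioi_section_zero (hf01 : ∀ x, f x ∈ Icc 0 1)
    (hτ : ∀ u ∈ Ioo 0 1, 1 - cdf ν (τ u) = u) :
    Tendsto (fun u => ∫ a in Ioi (τ u), f a ∂ν) (𝓝[>] 0) (𝓝 0) := by
  refine tendsto_of_tendsto_of_tendsto_of_le_of_le' tendsto_const_nhds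
    (tendsto_id.mono_left nhdsWithin_le_nhds) ?_ ?_ <;>
  filter_upwards [Ioo_mem_nhdsGT zero_lt_one] with u hu
  · exact (setIntegral_Ioi_mem_Icc (ν := ν) hf01 (τ u)).1
  · simpa only [hτ u hu, id] using (setIntegral_Ioi_mem_Icc (ν := ν) hf01 (τ u)).2

theorem tendsto_setIntegral_Ioi_section_one (hf : Antitone f) (hf01 : ∀ x, f x ∈ Icc 0 1)
    (hτ : ∀ u ∈ Ioo 0 1, 1 - cdf ν (τ u) = u) :
    Tendsto (fun u => ∫ a in Ioi (τ u), f a ∂ν) (𝓝[<] 1) (𝓝 (∫ a, f a ∂ν)) := by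
  have hlow : Tendsto (fun u : ℝ => ∫ a, f a ∂ν - (1 - u)) (𝓝[<] 1) (𝓝 (∫ a, f a ∂ν)) := by
    have : Continuous fun u : ℝ => ∫ a, f a ∂ν - (1 - u) := by fun_prop
    simpa using (this.tendsto 1).mono_left nhdsWithin_le_nhds
  refine tendsto_of_tendsto_of_tendsto_of_le_of_le' hlow tendsto_const_nhds ?_ ?_ <;>
  filter_upwards [Ioo_mem_nhdsLT zero_lt_one] with u hu <;>
  have := integral_sub_setIntegral_Ioi_mem_Icc (ν := ν) hf hf01 (τ u) <;>
  linarith [this.1, this.2, hτ u hu]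

theorem section_eq_rpow_of_setIntegral_Ioi_eq (hf : Antitone f) (hf01 : ∀ x, f x ∈ Icc 0 1)
    (hτ : ∀ u ∈ Ioo 0 1, 1 - cdf ν (τ u) = u) (hp : 0 < ∫ a, f a ∂ν)
    (h : ∀ x, ∫ a in Ioi x, f a ∂ν = (1 - cdf ν x) * f x * ∫ a, f a ∂ν) :
    ∀ u ∈ Ioo 0 1, f (τ u) = u ^ ((∫ a, f a ∂ν)⁻¹ - 1) := by
  have hψ : ∀ u ∈ Ioo 0 1, ∫ a in Ioi (τ u), f a ∂ν = u * f (τ u) * ∫ a, f a ∂ν :=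
    fun u hu => by rw [h, hτ u hu]
  refine eq_rpow_of_forall_sub_mem_Icc hp (fun u _ => hf01 _) (fun v hv u hu hvu => ?_)
    ((tendsto_setIntegral_Ioi_section_one hf hf01 hτ).congr'
      (eventually_of_mem (Ioo_mem_nhdsLT zero_lt_one) hψ))
  simpa only [hψ u hu, hψ v hv] using setIntegral_Ioi_section_sub_mem_Icc hf hf01 hτ hv hu hvu

theorem eq_one_sub_cdf_rpow_of_setIntegral_Ioi_eq (hcont : Continuous (cdf ν))
    (hf : Antitone f) (hf01 : ∀ x, f x ∈ Icc 0 1) (hp0 : 0 < ∫ a, f a ∂ν)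
    (hp1 : ∫ a, f a ∂ν < 1)
    (h : ∀ x, ∫ a in Ioi x, f a ∂ν = (1 - cdf ν x) * f x * ∫ a, f a ∂ν) (x : ℝ) :
    f x = (1 - cdf ν x) ^ ((∫ a, f a ∂ν)⁻¹ - 1) := by
  set p := ∫ a, f a ∂ν
  have hc : 0 < p⁻¹ - 1 := sub_pos.2 ((one_lt_inv₀ hp0).2 hp1)
  obtain ⟨τ, hτ⟩ := exists_one_sub_cdf_eq hcont
  have hmid : ∀ y, 1 - cdf ν y ∈ Ioo 0 1 → f y = (1 - cdf ν y) ^ (p⁻¹ - 1) := by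
    intro y hy
    have hlevel := setIntegral_Ioi_eq_of_cdf_eq hf hf01 (x := y) (y := τ (1 - cdf ν y))
      (by linarith [hτ _ hy])
    rw [h, h, hτ _ hy] at hlevel
    rw [← section_eq_rpow_of_setIntegral_Ioi_eq hf hf01 hτ hp0 h _ hy]
    exact mul_left_cancel₀ hy.1.ne' (mul_right_cancel₀ hp0.ne' hlevel)
  rcases (cdf_nonneg ν x).eq_or_lt with h0 | h0
  · have := (integral_sub_setIntegral_Ioi_mem_Icc (ν := ν) hf hf01 x).2
    rw [h, ← h0, sub_zero, one_mul, sub_nonpos] at this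
    rw [← h0, sub_zero, Real.one_rpow]
    exact le_antisymm (hf01 x).2 ((le_mul_iff_one_le_left hp0).1 this)
  rcases (cdf_le_one ν x).eq_or_lt with h1 | h1
  · rw [h1, sub_self, Real.zero_rpow hc.ne']
    exact le_antisymm (le_zero_of_cdf_eq_one hcont hf hc hmid h1) (hf01 x).1
  exact hmid x ⟨sub_pos.2 h1, sub_lt_self _ h0⟩

theorem setIntegral_Ioi_section_rpow {c : ℝ} (hc : 0 < c)
    (hτ : ∀ u ∈ Ioo 0 1, 1 - cdf ν (τ u) = u) :
    ∀ u ∈ Ioo 0 1, ∫ a in Ioi (τ u), (1 - cdf ν a) ^ c ∂ν = u ^ (c + 1) / (c + 1) := by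
  have hf01 := one_sub_cdf_rpow_mem_Icc (ν := ν) hc
  refine eq_rpow_div_of_forall_sub_mem_Icc hc (fun v hv u hu hvu => ?_)
    (tendsto_setIntegral_Ioi_section_zero hf01 hτ)
  simpa only [hτ u hu, hτ v hv] using
    setIntegral_Ioi_section_sub_mem_Icc (antitone_one_sub_cdf_rpow hc) hf01 hτ hv hu hvu

theorem integral_one_sub_cdf_rpow (hcont : Continuous (cdf ν)) {c : ℝ} (hc : 0 < c) :
    ∫ a, (1 - cdf ν a) ^ c ∂ν = (c + 1)⁻¹ := by
  obtain ⟨τ, hτ⟩ := exists_one_sub_cdf_eq hcont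
  have hlim : Tendsto (fun u : ℝ => u ^ (c + 1) / (c + 1)) (𝓝[<] 1) (𝓝 (c + 1)⁻¹) := by
    simpa using ((Real.continuousAt_rpow_const 1 (c + 1) (Or.inl one_ne_zero)).tendsto.div_const
      (c + 1)).mono_left nhdsWithin_le_nhds
  refine tendsto_nhds_unique (tendsto_setIntegral_Ioi_section_one
    (antitone_one_sub_cdf_rpow hc) (one_sub_cdf_rpow_mem_Icc hc) hτ) (hlim.congr' ?_)
  exact eventually_of_mem (Ioo_mem_nhdsLT zero_lt_one)
    fun u hu => (setIntegral_Ioi_section_rpow hc hτ u hu).symm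

theorem setIntegral_Ioi_one_sub_cdf_rpow (hcont : Continuous (cdf ν)) {c : ℝ} (hc : 0 < c)
    (x : ℝ) : ∫ a in Ioi x, (1 - cdf ν a) ^ c ∂ν = (1 - cdf ν x) ^ (c + 1) / (c + 1) := by
  have hf := antitone_one_sub_cdf_rpow (ν := ν) hc
  have hf01 := one_sub_cdf_rpow_mem_Icc (ν := ν) hc
  rcases (cdf_nonneg ν x).eq_or_lt with h0 | h0
  · have := integral_sub_setIntegral_Ioi_mem_Icc (ν := ν) hf hf01 x
    rw [← h0, Icc_self, mem_singleton_iff, integral_one_sub_cdf_rpow hcont hc, sub_eq_zero] at this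
    rw [← this, ← h0, sub_zero, Real.one_rpow, one_div]
  rcases (cdf_le_one ν x).eq_or_lt with h1 | h1
  · have := setIntegral_Ioi_mem_Icc (ν := ν) hf01 x
    rw [h1, sub_self, Icc_self, mem_singleton_iff] at this
    rw [this, h1, sub_self, Real.zero_rpow (by positivity), zero_div]
  obtain ⟨τ, hτ⟩ := exists_one_sub_cdf_eq hcont
  have hu : 1 - cdf ν x ∈ Ioo 0 1 := ⟨sub_pos.2 h1, sub_lt_self _ h0⟩
  rw [setIntegral_Ioi_eq_of_cdf_eq hf hf01 (y := τ (1 - cdf ν x)) (by linarith [hτ _ hu]),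
    setIntegral_Ioi_section_rpow hc hτ _ hu]

end OneSubCdf

section Independent

variable {Ω : Type*} [MeasurableSpace Ω] {μ : Measure Ω} [IsProbabilityMeasure μ] {X Y : Ω → ℝ}

theorem measureReal_le_eq_cdf_map (hX : Measurable X) (x : ℝ) :
    μ.real {ω | X ω ≤ x} = cdf (μ.map X) x := by
  have := Measure.isProbabilityMeasure_map (μ := μ) hX.aemeasurable
  rw [cdf_eq_real, map_measureReal_apply hX measurableSet_Iic]
  rfl

theorem measureReal_lt_min_eq (hX : Measurable X) (hY : Measurable Y) (hind : IndepFun X Y μ)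
    (x : ℝ) : μ.real {ω | x < min (X ω) (Y ω)} = (1 - cdf (μ.map X) x) * (1 - cdf (μ.map Y) x) := by
  have := Measure.isProbabilityMeasure_map (μ := μ) hX.aemeasurable
  have := Measure.isProbabilityMeasure_map (μ := μ) hY.aemeasurable
  have hset : {ω | x < min (X ω) (Y ω)} = X ⁻¹' Ioi x ∩ Y ⁻¹' Ioi x := by ext; simp
  rw [hset, measureReal_def, hind.measure_inter_preimage_eq_mul _ _ measurableSet_Ioi
    measurableSet_Ioi, ENNReal.toReal_mul, ← measureReal_def, ← measureReal_def,
    ← map_measureReal_apply hX measurableSet_Ioi, ← map_measureReal_apply hY measurableSet_Ioi,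
    measureReal_Ioi_eq_one_sub_cdf, measureReal_Ioi_eq_one_sub_cdf]

theorem measureReal_mem_and_lt_eq_setIntegral (hX : Measurable X) (hY : Measurable Y)
    (hind : IndepFun X Y μ) {B : Set ℝ} (hB : MeasurableSet B) :
    μ.real {ω | X ω ∈ B ∧ X ω < Y ω} = ∫ a in B, (1 - cdf (μ.map Y) a) ∂(μ.map X) := by
  have := Measure.isProbabilityMeasure_map (μ := μ) hY.aemeasurable
  have hL : MeasurableSet {q : ℝ × ℝ | q.1 < q.2} := measurableSet_lt measurable_fst measurable_snd
  have hE : MeasurableSet (B ×ˢ univ ∩ {q : ℝ × ℝ | q.1 < q.2}) := (hB.prod .univ).inter hL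
  have hjoint := (indepFun_iff_map_prod_eq_prod_map_map hX.aemeasurable hY.aemeasurable).1 hind
  have hrestrict : ((μ.map X).restrict B).prod (μ.map Y)
      = ((μ.map X).prod (μ.map Y)).restrict (B ×ˢ univ) := by
    rw [← Measure.prod_restrict, Measure.restrict_univ]
  calc μ.real {ω | X ω ∈ B ∧ X ω < Y ω}
      = μ.real ((fun ω => (X ω, Y ω)) ⁻¹' (B ×ˢ univ ∩ {q : ℝ × ℝ | q.1 < q.2})) := by
        congr 1; ext ω; simp
    _ = (((μ.map X).restrict B).prod (μ.map Y)).real {q : ℝ × ℝ | q.1 < q.2} := by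
        rw [← map_measureReal_apply (hX.prodMk hY) hE, hjoint, hrestrict, measureReal_def,
          measureReal_def, Measure.restrict_apply hL, inter_comm]
    _ = ∫ a in B, (1 - cdf (μ.map Y) a) ∂(μ.map X) := by
        rw [measureReal_def, Measure.prod_apply hL, ← integral_toReal
          (measurable_measure_prodMk_left hL).aemeasurable (.of_forall fun _ => measure_lt_top _ _)]
        exact integral_congr_ae (.of_forall fun a => measureReal_Ioi_eq_one_sub_cdf a)

theorem measureReal_lt_eq_integral (hX : Measurable X) (hY : Measurable Y)
    (hind : IndepFun X Y μ) :
    μ.real {ω | X ω < Y ω} = ∫ a, (1 - cdf (μ.map Y) a) ∂(μ.map X) := by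
  simpa using measureReal_mem_and_lt_eq_setIntegral hX hY hind .univ

theorem measureReal_lt_min_inter_lt_eq_setIntegral (hX : Measurable X) (hY : Measurable Y)
    (hind : IndepFun X Y μ) (x : ℝ) :
    μ.real ({ω | x < min (X ω) (Y ω)} ∩ {ω | X ω < Y ω})
      = ∫ a in Ioi x, (1 - cdf (μ.map Y) a) ∂(μ.map X) := by
  rw [← measureReal_mem_and_lt_eq_setIntegral hX hY hind measurableSet_Ioi]
  congr 1
  ext ω
  simp only [mem_inter_iff, mem_ofPred_eq, lt_min_iff, mem_Ioi]
  exact ⟨fun h => ⟨h.1.1, h.2⟩, fun h => ⟨⟨h.1, h.1.trans h.2⟩, h.2⟩⟩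

end Independent

/-- If F_X is continuous (F_Y arbitrary) and P(Y > X) ∈ (0,1), then min(X,Y) is
independent of {Y > X} iff 1 − F_Y = (1 − F_X)^c for some c > 0. -/
theorem stmt14 {Ω : Type*} [MeasurableSpace Ω] (μ : Measure Ω) [IsProbabilityMeasure μ]
    (X Y : Ω → ℝ) (hX : Measurable X) (hY : Measurable Y)
    (hind : IndepFun X Y μ)
    (hFXcont : Continuous fun t : ℝ => (μ {ω | X ω ≤ t}).toReal)
    (hp0 : 0 < (μ {ω | X ω < Y ω}).toReal) (hp1 : (μ {ω | X ω < Y ω}).toReal < 1) :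
    (∀ x : ℝ, (μ ({ω | x < min (X ω) (Y ω)} ∩ {ω | X ω < Y ω})).toReal
        = (μ {ω | x < min (X ω) (Y ω)}).toReal * (μ {ω | X ω < Y ω}).toReal)
    ↔ ∃ c > (0:ℝ), ∀ x : ℝ,
        1 - (μ {ω | Y ω ≤ x}).toReal = (1 - (μ {ω | X ω ≤ x}).toReal) ^ c := by
  have := Measure.isProbabilityMeasure_map (μ := μ) hX.aemeasurable
  simp only [← measureReal_def, measureReal_le_eq_cdf_map hX, measureReal_le_eq_cdf_map hY,
    measureReal_lt_min_eq hX hY hind, measureReal_lt_eq_integral hX hY hind,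
    measureReal_lt_min_inter_lt_eq_setIntegral hX hY hind] at hFXcont hp0 hp1 ⊢
  constructor
  · intro h
    exact ⟨_, sub_pos.2 ((one_lt_inv₀ hp0).2 hp1), eq_one_sub_cdf_rpow_of_setIntegral_Ioi_eq
      hFXcont antitone_one_sub_cdf one_sub_cdf_mem_Icc hp0 hp1 h⟩
  · rintro ⟨c, hc, hT⟩ x
    simp only [hT]
    rw [setIntegral_Ioi_one_sub_cdf_rpow hFXcont hc, integral_one_sub_cdf_rpow hFXcont hc,
      Real.rpow_add_one' (one_sub_cdf_mem_Icc x).1 (by positivity)]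
    ring
end
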